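/- arXiv:1210.5685 — 4 statements merged into one kernel-verified Lean document; each statement's English description precedes it below -/
import Mathlib

section
/- The integral of ξ over the interval [0, π/2] equals −π/2, i.e. ∫₀^{π/2} ξ(θ) dθ = −π/2 (the integrand is bounded on (0, π/2), so the integral is well defined). -/
/-!
ξ is the derivative of `θ + (θ² − π²/4) tan θ`, which is `0` at `0` and tends to `π/2 − π = −π/2`
at `π/2` because `(θ − π/2) / cos θ → −1`. Writing `cos θ = (π/2 − θ) sinc (π/2 − θ)` makes this
antiderivative continuous up to `π/2`. The fundamental theorem of calculus also needs ξ
integrable, which holds because ξ ≤ 0 on `[0, π/2]`: its numerator has derivative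
`4 θ cos² θ ≥ 0` and vanishes at `π/2`.
-/

open Real Set Filter Topology

/-- The test function ξ(θ) = (cos²θ + 2θ·sinθ·cosθ + θ² − π²/4)/cos²θ. -/
noncomputable def xi (θ : ℝ) : ℝ :=
  (Real.cos θ ^ 2 + 2 * θ * Real.sin θ * Real.cos θ + θ ^ 2 - Real.pi ^ 2 / 4) /
    Real.cos θ ^ 2

theorem Real.sinc_pos {x : ℝ} (hx : |x| < π) : 0 < sinc x := by
  rcases eq_or_ne x 0 with rfl | hx0
  · simp [sinc_zero]
  have habs : sinc x = sinc |x| := by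
    rcases abs_choice x with h | h <;> simp only [h, sinc_neg]
  rw [habs, sinc_of_ne_zero (abs_ne_zero.2 hx0)]
  exact div_pos (sin_pos_of_pos_of_lt_pi (abs_pos.2 hx0) hx) (abs_pos.2 hx0)

noncomputable def xiNumerator (θ : ℝ) : ℝ :=
  cos θ ^ 2 + 2 * θ * sin θ * cos θ + θ ^ 2 - π ^ 2 / 4

theorem hasDerivAt_xiNumerator (x : ℝ) : HasDerivAt xiNumerator (4 * x * cos x ^ 2) x := by
  refine ((((hasDerivAt_cos x).pow 2).add ((((hasDerivAt_id' x).const_mul 2).mul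
    (hasDerivAt_sin x)).mul (hasDerivAt_cos x))).add ((hasDerivAt_id' x).pow 2)
      |>.sub_const (π ^ 2 / 4)).congr_deriv ?_
  simp only [Nat.cast_ofNat, Nat.add_one_sub_one, pow_one, mul_neg, mul_one, Pi.mul_apply]
  linear_combination (-2 * x) * sin_sq_add_cos_sq x

theorem monotoneOn_xiNumerator : MonotoneOn xiNumerator (Ici 0) := by
  refine monotoneOn_of_hasDerivWithinAt_nonneg (convex_Ici 0)
    (fun x _ => (hasDerivAt_xiNumerator x).continuousAt.continuousWithinAt)
    (fun x _ => (hasDerivAt_xiNumerator x).hasDerivWithinAt) fun x hx => ?_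
  rw [interior_Ici] at hx
  have : 0 < x := hx
  positivity

theorem xi_nonpos {θ : ℝ} (h0 : 0 ≤ θ) (hθ : θ ≤ π / 2) : xi θ ≤ 0 := by
  have h := monotoneOn_xiNumerator h0 (by simp only [mem_Ici]; positivity) hθ
  simp only [xiNumerator, cos_pi_div_two, sin_pi_div_two] at h
  exact div_nonpos_of_nonpos_of_nonneg (by linarith) (sq_nonneg _)

noncomputable def xiAntideriv (θ : ℝ) : ℝ :=
  θ - (θ + π / 2) * sin θ / sinc (π / 2 - θ)

theorem xiAntideriv_eq_of_ne {θ : ℝ} (hθ : θ ≠ π / 2) :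
    xiAntideriv θ = θ + (θ ^ 2 - π ^ 2 / 4) * tan θ := by
  rw [xiAntideriv, sinc_of_ne_zero (sub_ne_zero.2 hθ.symm), sin_pi_div_two_sub,
    div_div_eq_mul_div, tan_eq_sin_div_cos]
  ring

theorem continuousOn_xiAntideriv : ContinuousOn xiAntideriv (Ioc (-(π / 2)) (π / 2)) := by
  refine continuousOn_id.sub (ContinuousOn.div (by fun_prop)
    (continuous_sinc.comp (continuous_sub_left _)).continuousOn fun θ hθ => ?_)
  refine (sinc_pos ?_).ne'
  rw [abs_lt]
  constructor <;> linarith [hθ.1, hθ.2, pi_pos]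

theorem hasDerivAt_xiAntideriv {x : ℝ} (hx : x ∈ Ioo (-(π / 2)) (π / 2)) :
    HasDerivAt xiAntideriv (xi x) x := by
  have hcos : cos x ≠ 0 := (cos_pos_of_mem_Ioo hx).ne'
  have h : HasDerivAt (fun θ => θ + (θ ^ 2 - π ^ 2 / 4) * tan θ) (xi x) x := by
    refine ((hasDerivAt_id' x).add (((hasDerivAt_pow 2 x).sub_const (π ^ 2 / 4)).mul
      (hasDerivAt_tan hcos))).congr_deriv ?_
    simp only [Nat.cast_ofNat, Nat.add_one_sub_one, pow_one, one_div]
    rw [xi, tan_eq_sin_div_cos]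
    field_simp
    ring
  refine h.congr_of_eventuallyEq ?_
  filter_upwards [isOpen_ne.mem_nhds hx.2.ne] with θ hθ
  exact xiAntideriv_eq_of_ne hθ

theorem xi_integral_half :
    ∫ θ in (0 : ℝ)..(Real.pi / 2), xi θ = -(Real.pi / 2) := by
  have hab : (0 : ℝ) ≤ π / 2 := by positivity
  have hIcc : Icc 0 (π / 2) ⊆ Ioc (-(π / 2)) (π / 2) :=
    fun x hx => ⟨by linarith [hx.1, pi_pos], hx.2⟩
  have hIoo : Ioo 0 (π / 2) ⊆ Ioo (-(π / 2)) (π / 2) := Ioo_subset_Ioo_left (by linarith)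
  have hcont := continuousOn_xiAntideriv.mono hIcc
  have hderiv : ∀ x ∈ Ioo 0 (π / 2), HasDerivAt xiAntideriv (xi x) x :=
    fun x hx => hasDerivAt_xiAntideriv (hIoo hx)
  have hint : IntervalIntegrable xi MeasureTheory.volume 0 (π / 2) := by
    rw [intervalIntegrable_iff_integrableOn_Ioc_of_le hab, ← neg_neg xi]
    exact (intervalIntegral.integrableOn_deriv_of_nonneg hcont.neg (fun x hx => (hderiv x hx).neg)
      fun x hx => neg_nonneg.2 (xi_nonpos hx.1.le hx.2.le)).neg
  rw [intervalIntegral.integral_eq_sub_of_hasDerivAt_of_le hab hcont hderiv hint]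
  simp only [xiAntideriv, add_halves, sin_pi_div_two, mul_one, sub_self, sinc_zero, div_one,
    zero_add, sin_zero, mul_zero, sub_zero, zero_div]
  ring
end

section
/- The derivative of ξ is strictly negative on the interval (−π/2, 0) and strictly positive on the interval (0, π/2). -/
open Real Set Filter Topology

/-!
ξ'(θ) = 2 g(θ) / cos³θ with g = `xiNumer` an odd function vanishing at 0 and π/2, so it
suffices that g > 0 on (0, π/2). Now g' = cos · h with h = `xiNumerDerivFactor`, and h' = k
with k(θ) = 2θ − 3 sin 2θ, k' = 2 − 6 cos 2θ. Going down this chain, each function changes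
sign exactly once on (0, π/2), from − to + for k' and k, from + to − for h and g': k' by
monotonicity of cos, k since k(0) = 0 < k(π/2), h since h(0) = 3 − π²/4 > 0 = h(π/2).
Hence g rises and then falls between its two zeros.
-/

def NegThenPosOn (f : ℝ → ℝ) (a b : ℝ) : Prop :=
  ∃ c ∈ Ioo a b, (∀ x ∈ Ioo a c, f x < 0) ∧ ∀ x ∈ Ioo c b, 0 < f x

namespace NegThenPosOn

variable {f : ℝ → ℝ} {a b : ℝ}

theorem pos_mul {w : ℝ → ℝ} (hf : NegThenPosOn f a b) (hw : ∀ x ∈ Ioo a b, 0 < w x) :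
    NegThenPosOn (fun x => w x * f x) a b := by
  obtain ⟨c, hc, hneg, hpos⟩ := hf
  refine ⟨c, hc, fun x hx => ?_, fun x hx => ?_⟩
  · exact mul_neg_of_pos_of_neg (hw x ⟨hx.1, hx.2.trans hc.2⟩) (hneg x hx)
  · exact mul_pos (hw x ⟨hc.1.trans hx.1, hx.2⟩) (hpos x hx)

theorem strictAntiOn_strictMonoOn (hf' : NegThenPosOn (deriv f) a b)
    (hf : ContinuousOn f (Icc a b)) :
    ∃ c ∈ Ioo a b, StrictAntiOn f (Icc a c) ∧ StrictMonoOn f (Icc c b) := by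
  obtain ⟨c, hc, hneg, hpos⟩ := hf'
  refine ⟨c, hc, strictAntiOn_of_deriv_neg (convex_Icc a c)
    (hf.mono (Icc_subset_Icc_right hc.2.le)) ?_, strictMonoOn_of_deriv_pos (convex_Icc c b)
    (hf.mono (Icc_subset_Icc_left hc.1.le)) ?_⟩ <;> simpa only [interior_Icc]

theorem neg_of_deriv (hf' : NegThenPosOn (deriv f) a b) (hf : ContinuousOn f (Icc a b))
    (ha : f a ≤ 0) (hb : f b ≤ 0) (x : ℝ) (hx : x ∈ Ioo a b) : f x < 0 := by
  obtain ⟨c, hc, hanti, hmono⟩ := hf'.strictAntiOn_strictMonoOn hf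
  rcases le_or_gt x c with hxc | hcx
  · exact (hanti (left_mem_Icc.2 hc.1.le) ⟨hx.1.le, hxc⟩ hx.1).trans_le ha
  · exact (hmono ⟨hcx.le, hx.2.le⟩ (right_mem_Icc.2 hc.2.le) hx.2).trans_le hb

theorem of_deriv (hf' : NegThenPosOn (deriv f) a b) (hf : ContinuousOn f (Icc a b))
    (ha : f a ≤ 0) (hb : 0 < f b) : NegThenPosOn f a b := by
  obtain ⟨c, hc, hanti, hmono⟩ := hf'.strictAntiOn_strictMonoOn hf
  have hfc : f c < 0 :=
    (hanti (left_mem_Icc.2 hc.1.le) (right_mem_Icc.2 hc.1.le) hc.1).trans_le ha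
  obtain ⟨m, hm, hfm⟩ : ∃ m ∈ Ioo c b, f m = 0 :=
    intermediate_value_Ioo hc.2.le (hf.mono (Icc_subset_Icc_left hc.1.le)) ⟨hfc, hb⟩
  refine ⟨m, ⟨hc.1.trans hm.1, hm.2⟩, fun x hx => ?_, fun x hx => ?_⟩
  · rcases le_or_gt x c with hxc | hcx
    · exact (hanti (left_mem_Icc.2 hc.1.le) ⟨hx.1.le, hxc⟩ hx.1).trans_le ha
    · exact hfm ▸ hmono ⟨hcx.le, (hx.2.trans hm.2).le⟩ ⟨hm.1.le, hm.2.le⟩ hx.2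
  · exact hfm ▸ hmono ⟨hm.1.le, hm.2.le⟩ ⟨(hm.1.trans hx.1).le, hx.2.le⟩ hx.1

theorem neg_of_deriv_of_pos (hf' : NegThenPosOn (deriv f) a b) (hf : ContinuousOn f (Icc a b))
    (ha : 0 < f a) (hb : f b ≤ 0) : NegThenPosOn (fun x => -f x) a b := by
  obtain ⟨c, hc, hanti, hmono⟩ := hf'.strictAntiOn_strictMonoOn hf
  have hfc : f c < 0 :=
    (hmono (left_mem_Icc.2 hc.2.le) (right_mem_Icc.2 hc.2.le) hc.2).trans_le hb
  obtain ⟨m, hm, hfm⟩ : ∃ m ∈ Ioo a c, f m = 0 :=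
    intermediate_value_Ioo' hc.1.le (hf.mono (Icc_subset_Icc_right hc.2.le)) ⟨hfc, ha⟩
  refine ⟨m, ⟨hm.1, hm.2.trans hc.2⟩, fun x hx => ?_, fun x hx => ?_⟩
  · have := hanti ⟨hx.1.le, (hx.2.trans hm.2).le⟩ ⟨hm.1.le, hm.2.le⟩ hx.2
    linarith
  · rcases le_or_gt x c with hxc | hcx
    · have := hanti ⟨hm.1.le, hm.2.le⟩ ⟨(hm.1.trans hx.1).le, hxc⟩ hx.1
      linarith
    · have := (hmono ⟨hcx.le, hx.2.le⟩ (right_mem_Icc.2 hc.2.le) hx.2).trans_le hb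
      linarith

end NegThenPosOn

theorem negThenPosOn_two_sub_six_cos_two_mul :
    NegThenPosOn (fun θ => 2 - 6 * cos (2 * θ)) 0 (π / 2) := by
  set c := arccos (1 / 3) / 2
  have h2c : 2 * c = arccos (1 / 3) := mul_div_cancel₀ _ two_ne_zero
  have hcos : cos (2 * c) = 1 / 3 := by rw [h2c, cos_arccos (by norm_num) (by norm_num)]
  have hc₀ : 0 < 2 * c := h2c ▸ arccos_pos.2 (by norm_num)
  have hc₁ : 2 * c < π :=
    h2c ▸ arccos_lt_pi_div_two.2 (by norm_num) |>.trans (by linarith [pi_pos])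
  refine ⟨c, ⟨by linarith, by linarith⟩, fun x hx => ?_, fun x hx => ?_⟩
  · have := cos_lt_cos_of_nonneg_of_le_pi (by linarith [hx.1]) hc₁.le
      (by linarith [hx.2] : 2 * x < 2 * c)
    linarith
  · have := cos_lt_cos_of_nonneg_of_le_pi hc₀.le (by linarith [hx.2])
      (by linarith [hx.1] : 2 * c < 2 * x)
    linarith

theorem hasDerivAt_two_mul_sub_three_sin_two_mul (θ : ℝ) :
    HasDerivAt (fun θ => 2 * θ - 3 * sin (2 * θ)) (2 - 6 * cos (2 * θ)) θ := by
  have h := (hasDerivAt_id' θ |>.const_mul 2).sub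
    ((hasDerivAt_id' θ |>.const_mul 2).sin.const_mul 3)
  exact h.congr_deriv (by ring)

theorem negThenPosOn_two_mul_sub_three_sin_two_mul :
    NegThenPosOn (fun θ => 2 * θ - 3 * sin (2 * θ)) 0 (π / 2) := by
  have hd : deriv (fun θ => 2 * θ - 3 * sin (2 * θ)) = fun θ => 2 - 6 * cos (2 * θ) :=
    funext fun θ => (hasDerivAt_two_mul_sub_three_sin_two_mul θ).deriv
  refine NegThenPosOn.of_deriv (hd ▸ negThenPosOn_two_sub_six_cos_two_mul) (by fun_prop)
    (by simp) ?_
  simp only [mul_div_cancel₀ π (two_ne_zero' ℝ), sin_pi]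
  linarith [pi_pos]

noncomputable def xiNumer (θ : ℝ) : ℝ :=
  sin θ * cos θ ^ 2 + 2 * θ * cos θ + (θ ^ 2 - π ^ 2 / 4) * sin θ

noncomputable def xiNumerDerivFactor (θ : ℝ) : ℝ :=
  3 * cos θ ^ 2 + θ ^ 2 - π ^ 2 / 4

theorem hasDerivAt_xiNumerDerivFactor (θ : ℝ) :
    HasDerivAt xiNumerDerivFactor (2 * θ - 3 * sin (2 * θ)) θ := by
  have h := (((hasDerivAt_cos θ).pow 2).const_mul 3).add (hasDerivAt_pow 2 θ) |>.sub_const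
    (π ^ 2 / 4)
  refine h.congr_deriv ?_
  rw [sin_two_mul]; push_cast; ring

theorem negThenPosOn_neg_xiNumerDerivFactor :
    NegThenPosOn (fun θ => -xiNumerDerivFactor θ) 0 (π / 2) := by
  have hd : deriv xiNumerDerivFactor = fun θ => 2 * θ - 3 * sin (2 * θ) :=
    funext fun θ => (hasDerivAt_xiNumerDerivFactor θ).deriv
  refine NegThenPosOn.neg_of_deriv_of_pos (hd ▸ negThenPosOn_two_mul_sub_three_sin_two_mul)
    (by unfold xiNumerDerivFactor; fun_prop) ?_ ?_
  · simp only [xiNumerDerivFactor, cos_zero]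
    nlinarith [pi_lt_d2, pi_pos]
  · exact le_of_eq (by simp only [xiNumerDerivFactor, cos_pi_div_two]; ring)

theorem hasDerivAt_xiNumer (θ : ℝ) :
    HasDerivAt xiNumer (cos θ * xiNumerDerivFactor θ) θ := by
  have h := (((hasDerivAt_sin θ).mul ((hasDerivAt_cos θ).pow 2)).add
    (((hasDerivAt_id' θ).const_mul 2).mul (hasDerivAt_cos θ))).add
    (((hasDerivAt_pow 2 θ).sub_const (π ^ 2 / 4)).mul (hasDerivAt_sin θ))
  refine h.congr_deriv ?_
  simp only [xiNumerDerivFactor, Pi.pow_apply]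
  push_cast
  linear_combination (-2 * cos θ) * sin_sq_add_cos_sq θ

theorem xiNumer_pos {θ : ℝ} (hθ : θ ∈ Ioo 0 (π / 2)) : 0 < xiNumer θ := by
  have hd : deriv (fun θ => -xiNumer θ) = fun θ => cos θ * -xiNumerDerivFactor θ :=
    funext fun θ => ((hasDerivAt_xiNumer θ).neg.congr_deriv (mul_neg _ _).symm).deriv
  have hcos : ∀ x ∈ Ioo 0 (π / 2), 0 < cos x := fun x hx =>
    cos_pos_of_mem_Ioo ⟨by linarith [hx.1, pi_pos], hx.2⟩
  have := NegThenPosOn.neg_of_deriv (hd ▸ negThenPosOn_neg_xiNumerDerivFactor.pos_mul hcos)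
    (by unfold xiNumer; fun_prop) (by simp [xiNumer]) (le_of_eq (by simp [xiNumer]; ring)) θ hθ
  linarith

theorem xiNumer_neg (θ : ℝ) : xiNumer (-θ) = -xiNumer θ := by
  simp only [xiNumer, sin_neg, cos_neg]
  ring

theorem hasDerivAt_xi {θ : ℝ} (hc : cos θ ≠ 0) :
    HasDerivAt xi (2 * xiNumer θ / cos θ ^ 3) θ := by
  have hnum : HasDerivAt (fun x => cos x ^ 2 + 2 * x * sin x * cos x + x ^ 2 - π ^ 2 / 4)
      (4 * θ * cos θ ^ 2) θ := by
    have h := (((hasDerivAt_cos θ).pow 2).add ((((hasDerivAt_id' θ).const_mul 2).mul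
      (hasDerivAt_sin θ)).mul (hasDerivAt_cos θ))).add (hasDerivAt_pow 2 θ) |>.sub_const
      (π ^ 2 / 4)
    refine h.congr_deriv ?_
    simp only [Pi.mul_apply]
    push_cast
    linear_combination (-2 * θ) * sin_sq_add_cos_sq θ
  have h := hnum.div ((hasDerivAt_cos θ).pow 2) (pow_ne_zero 2 hc)
  refine h.congr_deriv ?_
  simp only [Pi.pow_apply]
  rw [div_eq_div_iff (pow_ne_zero 2 (pow_ne_zero 2 hc)) (pow_ne_zero 3 hc)]
  simp only [xiNumer]
  push_cast
  linear_combination (4 * θ * cos θ ^ 5) * sin_sq_add_cos_sq θ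

theorem xi_deriv_sign :
    (∀ θ ∈ Set.Ioo (-(Real.pi / 2)) (0 : ℝ), deriv xi θ < 0) ∧
    (∀ θ ∈ Set.Ioo (0 : ℝ) (Real.pi / 2), 0 < deriv xi θ) := by
  constructor
  · intro θ hθ
    have hc : 0 < cos θ := cos_pos_of_mem_Ioo ⟨hθ.1, by linarith [hθ.2, pi_pos]⟩
    have hneg : xiNumer θ < 0 := by
      have := xiNumer_pos (θ := -θ) ⟨by linarith [hθ.2], by linarith [hθ.1]⟩
      rw [xiNumer_neg] at this
      linarith
    rw [(hasDerivAt_xi hc.ne').deriv]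
    exact div_neg_of_neg_of_pos (by linarith) (by positivity)
  · intro θ hθ
    have hc : 0 < cos θ := cos_pos_of_mem_Ioo ⟨by linarith [hθ.1, pi_pos], hθ.2⟩
    rw [(hasDerivAt_xi hc.ne').deriv]
    have := xiNumer_pos hθ
    positivity
end

section
/- Let δ be a real number with 0 < δ ≤ 1/2 and define z(θ) = 1 + δ·ξ(θ). Then for every θ in (−π/2, π/2), z(θ) ≥ 3/2 − π²/8, and in particular z(θ) > 0. -/
/-!
Multiplying out by cos²θ, the bound ξ(θ) ≥ 1 − π²/4 is the inequality
(π²/4)·sin²θ ≤ θ² + 2θ·sinθ·cosθ, which is even in θ. For 0 < θ ≤ π/2 the function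
(θ² + 2θ·sinθ·cosθ)/sin²θ has derivative 2cosθ·(sin²θ − θ²)/sin³θ ≤ 0, so it decreases to its
value π²/4 at π/2. Since 0 < δ ≤ 1/2, z(θ) = 1 + δ·ξ(θ) ≥ 1 + (1 − π²/4)/2, positive as π² < 12.
-/

open Real Set Filter Topology

namespace Real

lemma hasDerivAt_sq_add_two_mul_sin_mul_cos_div_sin_sq {θ : ℝ} (hθ : sin θ ≠ 0) :
    HasDerivAt (fun x => (x ^ 2 + 2 * x * sin x * cos x) / sin x ^ 2)
      (2 * cos θ * (sin θ ^ 2 - θ ^ 2) / sin θ ^ 3) θ := by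
  have hnum : HasDerivAt (fun x => x ^ 2 + 2 * x * sin x * cos x)
      (2 * θ + 2 * sin θ * cos θ + 2 * θ * (cos θ ^ 2 - sin θ ^ 2)) θ :=
    ((hasDerivAt_pow 2 θ).fun_add ((((hasDerivAt_id' θ).const_mul 2).fun_mul
      (hasDerivAt_sin θ)).fun_mul (hasDerivAt_cos θ))).congr_deriv (by push_cast; ring)
  refine (hnum.fun_div ((hasDerivAt_sin θ).fun_pow 2) (pow_ne_zero 2 hθ)).congr_deriv ?_
  field_simp
  linear_combination (-2 * θ * sin θ ^ 2) * sin_sq_add_cos_sq θ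

lemma antitoneOn_sq_add_two_mul_sin_mul_cos_div_sin_sq :
    AntitoneOn (fun x => (x ^ 2 + 2 * x * sin x * cos x) / sin x ^ 2) (Ioc 0 (π / 2)) := by
  have hsin : ∀ x ∈ Ioc 0 (π / 2), 0 < sin x := fun x hx =>
    sin_pos_of_pos_of_lt_pi hx.1 (hx.2.trans_lt (by linarith [pi_pos]))
  refine antitoneOn_of_hasDerivWithinAt_nonpos
    (f' := fun x => 2 * cos x * (sin x ^ 2 - x ^ 2) / sin x ^ 3) (convex_Ioc 0 (π / 2)) ?_ ?_ ?_
  · exact fun x hx => (hasDerivAt_sq_add_two_mul_sin_mul_cos_div_sin_sq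
      (hsin x hx).ne').continuousAt.continuousWithinAt
  · rw [interior_Ioc]
    exact fun x hx => (hasDerivAt_sq_add_two_mul_sin_mul_cos_div_sin_sq
      (hsin x (Ioo_subset_Ioc_self hx)).ne').hasDerivWithinAt
  · rw [interior_Ioc]
    intro x hx
    have hcos : 0 ≤ cos x := cos_nonneg_of_mem_Icc ⟨by linarith [hx.1, pi_pos], hx.2.le⟩
    have hsinx := hsin x (Ioo_subset_Ioc_self hx)
    exact div_nonpos_of_nonpos_of_nonneg
      (mul_nonpos_of_nonneg_of_nonpos (by positivity) (sub_nonpos.2 sin_sq_le_sq))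
      (by positivity)

lemma pi_sq_div_four_mul_sin_sq_le {θ : ℝ} (hθ : |θ| ≤ π / 2) :
    π ^ 2 / 4 * sin θ ^ 2 ≤ θ ^ 2 + 2 * θ * sin θ * cos θ := by
  wlog hθ0 : 0 < θ generalizing θ
  · rcases (not_lt.1 hθ0).lt_or_eq with hneg | rfl
    · simpa using this (θ := -θ) (by rwa [abs_neg]) (by linarith)
    · simp
  have hθ' : θ ∈ Ioc 0 (π / 2) := ⟨hθ0, (le_abs_self θ).trans hθ⟩
  have hsin : 0 < sin θ := sin_pos_of_pos_of_lt_pi hθ0 (hθ'.2.trans_lt (by linarith [pi_pos]))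
  have := antitoneOn_sq_add_two_mul_sin_mul_cos_div_sin_sq hθ' ⟨by positivity, le_rfl⟩ hθ'.2
  simp only [sin_pi_div_two, cos_pi_div_two] at this
  rw [le_div_iff₀ (by positivity)] at this
  linarith

end Real

lemma one_sub_pi_sq_div_four_le_xi {θ : ℝ} (hθ : θ ∈ Ioo (-(π / 2)) (π / 2)) :
    1 - π ^ 2 / 4 ≤ xi θ := by
  have hcos : 0 < cos θ := cos_pos_of_mem_Ioo hθ
  rw [xi, le_div_iff₀ (by positivity)]
  nlinarith [pi_sq_div_four_mul_sin_sq_le (abs_le.2 ⟨hθ.1.le, hθ.2.le⟩), sin_sq_add_cos_sq θ]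

lemma div_two_le_mul_of_le {δ x m : ℝ} (hδ0 : 0 ≤ δ) (hδ1 : δ ≤ 1 / 2) (hm : m ≤ 0)
    (hx : m ≤ x) : m / 2 ≤ δ * x := by
  rcases le_total 0 x with h | h <;> nlinarith

theorem z_lower_bound (δ : ℝ) (hδ0 : 0 < δ) (hδ1 : δ ≤ 1 / 2) :
    ∀ θ ∈ Set.Ioo (-(Real.pi / 2)) (Real.pi / 2),
      3 / 2 - Real.pi ^ 2 / 8 ≤ 1 + δ * xi θ ∧ 0 < 1 + δ * xi θ := by
  intro θ hθ
  have hpi : π ^ 2 < 12 := by nlinarith [pi_pos, pi_lt_d2]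
  have hz : (1 - π ^ 2 / 4) / 2 ≤ δ * xi θ :=
    div_two_le_mul_of_le hδ0.le hδ1 (by nlinarith [pi_gt_three]) (one_sub_pi_sq_div_four_le_xi hθ)
  constructor <;> linarith
end

section
/- For every real number δ, ∫₀^{π/2} (1 + δ·ξ(θ)) dθ = (π/2)·(1 − δ). -/
/-!
`(π²/4 - θ²) tan θ` is a primitive of `1 - ξ` on `(0, π/2)`. Its derivative is nonnegative there,
because `2 sin θ cos θ = sin (π - 2θ) ≤ π - 2θ`; hence `1 - ξ` is integrable, and its integral is
the difference of the one-sided limits `π` at `π/2` and `0` at `0`.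
-/

open Real Set Filter Topology

open MeasureTheory

theorem intervalIntegrable_deriv_of_nonneg_of_tendsto {f f' : ℝ → ℝ} {a b fa fb : ℝ}
    (hab : a < b) (hderiv : ∀ x ∈ Ioo a b, HasDerivAt f (f' x) x)
    (hpos : ∀ x ∈ Ioo a b, 0 ≤ f' x) (ha : Tendsto f (𝓝[>] a) (𝓝 fa))
    (hb : Tendsto f (𝓝[<] b) (𝓝 fb)) : IntervalIntegrable f' volume a b := by
  -- Redefining `f` at the endpoints makes it continuous on `[a, b]`.
  set F : ℝ → ℝ := Function.update (Function.update f a fa) b fb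
  have hFf : EqOn F f (Ioo a b) := fun x hx => by
    simp only [F, Function.update_of_ne hx.2.ne, Function.update_of_ne hx.1.ne']
  have hFderiv : ∀ x ∈ Ioo a b, HasDerivAt F (f' x) x := fun x hx =>
    (hderiv x hx).congr_of_eventuallyEq (eventuallyEq_of_mem (Ioo_mem_nhds hx.1 hx.2) hFf)
  have hFcont : ContinuousOn F (Icc a b) := by
    rw [continuousOn_update_iff, continuousOn_update_iff, Icc_sdiff_right, Ico_sdiff_left]
    refine ⟨⟨fun x hx => (hderiv x hx).continuousAt.continuousWithinAt,
      fun _ => ha.mono_left (nhdsWithin_mono _ Ioo_subset_Ioi_self)⟩, fun _ => ?_⟩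
    refine (hb.congr' ?_).mono_left (nhdsWithin_mono _ Ico_subset_Iio_self)
    filter_upwards [Ioo_mem_nhdsLT hab] with x hx
    exact (Function.update_of_ne hx.1.ne' _ _).symm
  exact (intervalIntegrable_iff_integrableOn_Ioc_of_le hab.le).2
    (intervalIntegral.integrableOn_deriv_of_nonneg hFcont hFderiv hpos)

theorem xi_le_one {θ : ℝ} (h0 : 0 ≤ θ) (h1 : θ ≤ π / 2) : xi θ ≤ 1 := by
  have hsin : 2 * sin θ * cos θ ≤ π - 2 * θ := by
    rw [← sin_two_mul, ← sin_pi_sub]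
    exact sin_le (by linarith)
  refine div_le_one_of_le₀ ?_ (sq_nonneg _)
  nlinarith [mul_le_mul_of_nonneg_left hsin h0]

theorem hasDerivAt_sq_sub_mul_tan {θ : ℝ} (hθ : cos θ ≠ 0) :
    HasDerivAt (fun t => (π ^ 2 / 4 - t ^ 2) * tan t) (1 - xi θ) θ := by
  refine (((hasDerivAt_pow 2 θ).const_sub _).mul (hasDerivAt_tan hθ)).congr_deriv ?_
  rw [xi, tan_eq_sin_div_cos]
  field_simp
  ring

theorem tendsto_sq_sub_mul_tan_nhdsGT_zero :
    Tendsto (fun t => (π ^ 2 / 4 - t ^ 2) * tan t) (𝓝[>] 0) (𝓝 0) := by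
  have hcont : ContinuousAt (fun t => (π ^ 2 / 4 - t ^ 2) * tan t) 0 :=
    (continuousAt_const.sub (continuousAt_id.pow 2)).mul (continuousAt_tan.2 (by simp))
  simpa using hcont.tendsto.mono_left nhdsWithin_le_nhds

theorem tendsto_sq_sub_mul_tan_nhdsLT_pi_div_two :
    Tendsto (fun t => (π ^ 2 / 4 - t ^ 2) * tan t) (𝓝[<] (π / 2)) (𝓝 π) := by
  -- `(t - π/2) / cos t` is the reciprocal slope of `cos` at `π/2`, so it tends to `-1`.
  have hslope : Tendsto (fun t => (slope cos (π / 2) t)⁻¹) (𝓝[<] (π / 2)) (𝓝 (-1)) := by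
    simpa using ((hasDerivAt_iff_tendsto_slope.1 (hasDerivAt_cos (π / 2))).inv₀
      (by simp)).mono_left (nhdsLT_le_nhdsNE _)
  have hrest : Tendsto (fun t => -(t + π / 2) * sin t) (𝓝[<] (π / 2)) (𝓝 (-π)) := by
    have h : Continuous fun t => -(t + π / 2) * sin t := by fun_prop
    simpa [← two_mul, mul_div_cancel₀] using (h.tendsto (π / 2)).mono_left nhdsWithin_le_nhds
  have h := hrest.mul hslope
  rw [neg_mul_neg, mul_one] at h
  refine h.congr fun t => ?_
  rw [slope_def_field, cos_pi_div_two, sub_zero, inv_div, tan_eq_sin_div_cos]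
  ring

theorem hasDerivAt_sq_sub_mul_tan_of_mem_Ioo {θ : ℝ} (hθ : θ ∈ Ioo 0 (π / 2)) :
    HasDerivAt (fun t => (π ^ 2 / 4 - t ^ 2) * tan t) (1 - xi θ) θ :=
  hasDerivAt_sq_sub_mul_tan
    (cos_pos_of_mem_Ioo (Ioo_subset_Ioo_left (by linarith [pi_pos]) hθ)).ne'

theorem intervalIntegrable_one_sub_xi :
    IntervalIntegrable (fun θ => 1 - xi θ) volume 0 (π / 2) :=
  intervalIntegrable_deriv_of_nonneg_of_tendsto (by positivity)
    (fun _ => hasDerivAt_sq_sub_mul_tan_of_mem_Ioo)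
    (fun _ hθ => sub_nonneg.2 (xi_le_one hθ.1.le hθ.2.le))
    tendsto_sq_sub_mul_tan_nhdsGT_zero tendsto_sq_sub_mul_tan_nhdsLT_pi_div_two

theorem integral_one_sub_xi : ∫ θ in (0 : ℝ)..(π / 2), (1 - xi θ) = π := by
  rw [intervalIntegral.integral_eq_sub_of_hasDerivAt_of_tendsto (by positivity)
    (fun _ => hasDerivAt_sq_sub_mul_tan_of_mem_Ioo) intervalIntegrable_one_sub_xi
    tendsto_sq_sub_mul_tan_nhdsGT_zero tendsto_sq_sub_mul_tan_nhdsLT_pi_div_two, sub_zero]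

theorem z_integral_half (δ : ℝ) :
    ∫ θ in (0 : ℝ)..(Real.pi / 2), (1 + δ * xi θ) = Real.pi / 2 * (1 - δ) := by
  have hsplit : (fun θ => 1 + δ * xi θ) = fun θ => (1 + δ) - δ * (1 - xi θ) := by
    ext θ; ring
  rw [hsplit, intervalIntegral.integral_sub intervalIntegrable_const
    (intervalIntegrable_one_sub_xi.const_mul δ), intervalIntegral.integral_const_mul,
    integral_one_sub_xi, intervalIntegral.integral_const]
  simp only [sub_zero, smul_eq_mul]
  ring
end
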